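/- Let a and b be discrete phase-type (PH) distributions on ℕ (the distributions of independent ℕ-valued random variables X and Y), and suppose s = ∑ₙ a n · b n > 0. Then the conditional distribution of X given the event X = Y, namely n ↦ a n · b n / s, belongs to F_alg. -/

import Mathlib

open Matrix Filter

/-- `p` is a probability distribution on ℕ. -/
def IsProbDist (p : ℕ → ℝ) : Prop :=
  (∀ n, 0 ≤ p n) ∧ HasSum p 1

/-- `p` is a discrete phase-type (PH) distribution on ℕ. -/
def IsPH (p : ℕ → ℝ) : Prop :=
  IsProbDist p ∧
  ∃ m : ℕ, 1 ≤ m ∧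
    ∃ (α : Fin m → ℝ) (T : Matrix (Fin m) (Fin m) ℝ),
      (∀ i, 0 ≤ α i) ∧ (∑ i, α i) ≤ 1 ∧
      (∀ i j, 0 ≤ T i j) ∧ (∀ i, (∑ j, T i j) ≤ 1) ∧
      p 0 = 1 - ∑ i, α i ∧
      ∀ n, 1 ≤ n → p n = α ⬝ᵥ (T ^ (n - 1)).mulVec (fun i => 1 - ∑ j, T i j)

/-- One step of the SCFG fixed-point iteration: substitute the power series
`f W` for the variable `y_W` and `PowerSeries.X` for the variable `z`
(`none` encodes `z`, `some W` encodes `y_W`). -/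
noncomputable def grammarStep {V : Type} (P : V → MvPolynomial (Option V) ℝ)
    (f : V → PowerSeries ℝ) (W : V) : PowerSeries ℝ :=
  MvPolynomial.aeval (fun o : Option V => o.elim PowerSeries.X f) (P W)

/-- The SCFG fixed-point iteration starting from the zero tuple. -/
noncomputable def grammarIter {V : Type} (P : V → MvPolynomial (Option V) ℝ) :
    ℕ → V → PowerSeries ℝ
  | 0 => fun _ => 0
  | k + 1 => grammarStep P (grammarIter P k)

/-- `q` belongs to `F_alg`: `q` is a normalized ℝ₊-algebraic sequence, i.e. it is
produced by a stochastic context-free grammar over a one-letter alphabet.  There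
are a finite set `V` of nonterminals with start symbol `S` and polynomials `P W`
with nonnegative coefficients in the variables `(y_W)` and `z` such that the
fixed-point iteration from the zero tuple converges coefficientwise to a tuple
`f` of power series with nonnegative coefficients satisfying `f_V = P_V(f, z)`,
the coefficients of `f S` have finite positive sum `s`, and `q n = [zⁿ](f S)/s`. -/
def MemFalg (q : ℕ → ℝ) : Prop :=
  ∃ (V : Type) (_ : Fintype V) (S : V) (P : V → MvPolynomial (Option V) ℝ)
    (f : V → PowerSeries ℝ),
    (∀ W d, 0 ≤ MvPolynomial.coeff d (P W)) ∧
    (∀ W (n : ℕ), Tendsto (fun k => PowerSeries.coeff n (grammarIter P k W))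
      atTop (nhds (PowerSeries.coeff n (f W)))) ∧
    (∀ W, f W = grammarStep P f W) ∧
    (∀ W (n : ℕ), 0 ≤ PowerSeries.coeff n (f W)) ∧
    ∃ s : ℝ, HasSum (fun n => PowerSeries.coeff n (f S)) s ∧ 0 < s ∧
      ∀ n, q n = PowerSeries.coeff n (f S) / s

/-! The pointwise product of `α Tⁿ t` and `β Uⁿ u` is `(α ⊗ β) (T ⊗ U)ⁿ (t ⊗ u)`, so the product
of two PH distributions is again `ℝ₊`-rational. An `ℝ₊`-rational sequence is generated by a
right-linear grammar in which every production of a non-start symbol is guarded by `z`, so the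
`k`-th iterate agrees with the solution modulo `zᵏ`; this gives the coefficientwise convergence
of the iteration. -/

namespace MvPolynomial

variable (σ R : Type*) [CommSemiring R] [PartialOrder R] [IsOrderedRing R]

def nonnegCoeffs : Subsemiring (MvPolynomial σ R) where
  carrier := {p | ∀ d, 0 ≤ p.coeff d}
  zero_mem' d := by simp
  one_mem' d := by classical rw [coeff_one]; split_ifs <;> simp
  add_mem' hp hq d := by rw [coeff_add]; exact add_nonneg (hp d) (hq d)
  mul_mem' hp hq d := by
    classical
    rw [coeff_mul]; exact Finset.sum_nonneg fun x _ => mul_nonneg (hp x.1) (hq x.2)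

variable {σ R}

lemma C_mem_nonnegCoeffs {c : R} (hc : 0 ≤ c) : C c ∈ nonnegCoeffs σ R := fun d => by
  classical
  rw [coeff_C]; split_ifs <;> simp [hc]

lemma X_mem_nonnegCoeffs (v : σ) : X v ∈ nonnegCoeffs σ R := fun d => by
  classical
  rw [coeff_X]; split_ifs <;> simp

end MvPolynomial

open scoped Kronecker

section Kronecker

variable {R l m n p : Type*} [CommSemiring R] [Fintype m] [Fintype p]

lemma kronecker_mulVec_mul (A : Matrix l m R) (B : Matrix n p R) (x : m → R) (y : p → R) :
    (A ⊗ₖ B) *ᵥ (fun j => x j.1 * y j.2) = fun i => (A *ᵥ x) i.1 * (B *ᵥ y) i.2 := by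
  ext i
  simp only [mulVec, dotProduct, kroneckerMap_apply, Fintype.sum_prod_type, Finset.sum_mul_sum]
  exact Finset.sum_congr rfl fun _ _ => Finset.sum_congr rfl fun _ _ => by ring

lemma dotProduct_mul_mul (x v : m → R) (y w : p → R) :
    (fun i : m × p => x i.1 * y i.2) ⬝ᵥ (fun i => v i.1 * w i.2) = (x ⬝ᵥ v) * (y ⬝ᵥ w) := by
  simp only [dotProduct, Fintype.sum_prod_type, Finset.sum_mul_sum]
  exact Finset.sum_congr rfl fun _ _ => Finset.sum_congr rfl fun _ _ => by ring

lemma kronecker_pow [DecidableEq m] [DecidableEq p] (A : Matrix m m R) (B : Matrix p p R)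
    (k : ℕ) : (A ⊗ₖ B) ^ k = (A ^ k) ⊗ₖ (B ^ k) := by
  induction k with
  | zero => rw [pow_zero, pow_zero, pow_zero, one_kronecker_one]
  | succ k ih => rw [pow_succ, pow_succ, pow_succ, ih, mul_kronecker_mul]

end Kronecker

lemma mulVec_nonneg_of_nonneg {ι : Type*} [Fintype ι] {T : Matrix ι ι ℝ} {t : ι → ℝ}
    (hT : ∀ i j, 0 ≤ T i j) (ht : 0 ≤ t) : 0 ≤ T *ᵥ t :=
  fun i => dotProduct_nonneg_of_nonneg (hT i) ht

/-- An `ℝ₊`-rational sequence: its generating function is `q 0 + z α (1 - z T)⁻¹ t`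
for nonnegative `α`, `T`, `t`. -/
def IsNonnegRational (q : ℕ → ℝ) : Prop :=
  0 ≤ q 0 ∧ ∃ (ι : Type) (_ : Fintype ι) (_ : DecidableEq ι) (α t : ι → ℝ) (T : Matrix ι ι ℝ),
    0 ≤ α ∧ 0 ≤ t ∧ (∀ i j, 0 ≤ T i j) ∧ ∀ n, q (n + 1) = α ⬝ᵥ (T ^ n *ᵥ t)

lemma IsPH.isNonnegRational {p : ℕ → ℝ} (hp : IsPH p) : IsNonnegRational p := by
  obtain ⟨⟨hp0, -⟩, m, -, α, T, hα, -, hT, hTrow, -, hpn⟩ := hp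
  refine ⟨hp0 0, Fin m, inferInstance, inferInstance, α, fun i => 1 - ∑ j, T i j, T, hα,
    fun i => sub_nonneg.2 (hTrow i), hT, fun n => ?_⟩
  simpa using hpn (n + 1) (Nat.le_add_left 1 n)

lemma IsNonnegRational.nonneg {q : ℕ → ℝ} (hq : IsNonnegRational q) : 0 ≤ q := by
  obtain ⟨hq0, ι, _, _, α, t, T, hα, ht, hT, hqn⟩ := hq
  rintro (_ | n)
  · exact hq0
  · rw [hqn]
    exact dotProduct_nonneg_of_nonneg hα (mulVec_nonneg_of_nonneg (pow_apply_nonneg hT n) ht)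

lemma IsNonnegRational.mul {p q : ℕ → ℝ} (hp : IsNonnegRational p) (hq : IsNonnegRational q) :
    IsNonnegRational (p * q) := by
  obtain ⟨hp0, ι, _, _, α, t, T, hα, ht, hT, hpn⟩ := hp
  obtain ⟨hq0, κ, _, _, β, u, U, hβ, hu, hU, hqn⟩ := hq
  refine ⟨mul_nonneg hp0 hq0, ι × κ, inferInstance, inferInstance, fun i => α i.1 * β i.2,
    fun i => t i.1 * u i.2, T ⊗ₖ U, fun i => mul_nonneg (hα i.1) (hβ i.2),
    fun i => mul_nonneg (ht i.1) (hu i.2), fun i j => mul_nonneg (hT _ _) (hU _ _), fun n => ?_⟩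
  rw [kronecker_pow, kronecker_mulVec_mul, dotProduct_mul_mul, Pi.mul_apply, hpn, hqn]

section RationalGrammar

variable {ι : Type} [Fintype ι] (c : ℝ) (α t : ι → ℝ) (T : Matrix ι ι ℝ)

/-- The right-linear grammar `S → c + ∑ᵢ αᵢ Yᵢ`, `Yᵢ → z (tᵢ + ∑ⱼ Tᵢⱼ Yⱼ)`, with `S = none`
and `Yᵢ = some i`. -/
noncomputable def rationalGrammar : Option ι → MvPolynomial (Option (Option ι)) ℝ
  | none => .C c + ∑ i, .C (α i) * .X (some (some i))
  | some i => .X none * (.C (t i) + ∑ j, .C (T i j) * .X (some (some j)))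

variable {c α t T}

lemma grammarStep_rationalGrammar_none (f : Option ι → PowerSeries ℝ) :
    grammarStep (rationalGrammar c α t T) f none = .C c + ∑ i, .C (α i) * f (some i) := by
  simp [grammarStep, rationalGrammar]

lemma grammarStep_rationalGrammar_some (f : Option ι → PowerSeries ℝ) (i : ι) :
    grammarStep (rationalGrammar c α t T) f (some i) =
      .X * (.C (t i) + ∑ j, .C (T i j) * f (some j)) := by
  simp [grammarStep, rationalGrammar]

lemma rationalGrammar_mem_nonnegCoeffs (hc : 0 ≤ c) (hα : 0 ≤ α) (ht : 0 ≤ t)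
    (hT : ∀ i j, 0 ≤ T i j) (W : Option ι) :
    rationalGrammar c α t T W ∈ MvPolynomial.nonnegCoeffs _ ℝ := by
  open MvPolynomial in
  cases W with
  | none =>
    exact add_mem (C_mem_nonnegCoeffs hc)
      (sum_mem fun i _ => mul_mem (C_mem_nonnegCoeffs (hα i)) (X_mem_nonnegCoeffs _))
  | some i =>
    exact mul_mem (X_mem_nonnegCoeffs _) (add_mem (C_mem_nonnegCoeffs (ht i))
      (sum_mem fun j _ => mul_mem (C_mem_nonnegCoeffs (hT i j)) (X_mem_nonnegCoeffs _)))

variable (c α t T) [DecidableEq ι]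

noncomputable def exitSeries (i : ι) : PowerSeries ℝ :=
  PowerSeries.mk fun n => (T ^ n *ᵥ t) i

noncomputable def rationalSolution : Option ι → PowerSeries ℝ
  | none => .C c + ∑ i, .C (α i) * (.X * exitSeries t T i)
  | some i => .X * exitSeries t T i

variable {c α t T}

lemma exitSeries_eq (i : ι) :
    exitSeries t T i = .C (t i) + ∑ j, .C (T i j) * (.X * exitSeries t T j) := by
  ext (_ | n)
  · simp [exitSeries]
  · simp only [exitSeries, map_add, map_sum, PowerSeries.coeff_C_mul, PowerSeries.coeff_C,
      PowerSeries.coeff_succ_X_mul, PowerSeries.coeff_mk]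
    rw [pow_succ', ← mulVec_mulVec]
    simp [mulVec, dotProduct]

lemma rationalSolution_eq_grammarStep (W : Option ι) :
    rationalSolution c α t T W =
      grammarStep (rationalGrammar c α t T) (rationalSolution c α t T) W := by
  cases W with
  | none => rw [grammarStep_rationalGrammar_none]; rfl
  | some i =>
    rw [grammarStep_rationalGrammar_some]
    exact congrArg (.X * ·) (exitSeries_eq i)

lemma X_pow_dvd_grammarIter_sub_rationalSolution (k : ℕ) (i : ι) :
    PowerSeries.X ^ k ∣
      grammarIter (rationalGrammar c α t T) k (some i) - rationalSolution c α t T (some i) := by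
  induction k generalizing i with
  | zero => simp
  | succ k ih =>
    rw [rationalSolution_eq_grammarStep, grammarIter, grammarStep_rationalGrammar_some,
      grammarStep_rationalGrammar_some, ← mul_sub, add_sub_add_left_eq_sub,
      ← Finset.sum_sub_distrib, pow_succ']
    exact mul_dvd_mul_left _ (Finset.dvd_sum fun j _ => by rw [← mul_sub]; exact (ih j).mul_left _)

lemma X_pow_dvd_grammarIter_succ_sub_rationalSolution (k : ℕ) (W : Option ι) :
    PowerSeries.X ^ k ∣
      grammarIter (rationalGrammar c α t T) (k + 1) W - rationalSolution c α t T W := by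
  cases W with
  | none =>
    rw [rationalSolution_eq_grammarStep, grammarIter, grammarStep_rationalGrammar_none,
      grammarStep_rationalGrammar_none, add_sub_add_left_eq_sub, ← Finset.sum_sub_distrib]
    exact Finset.dvd_sum fun i _ => by
      rw [← mul_sub]; exact (X_pow_dvd_grammarIter_sub_rationalSolution k i).mul_left _
  | some i =>
    exact (pow_dvd_pow _ k.le_succ).trans (X_pow_dvd_grammarIter_sub_rationalSolution (k + 1) i)

lemma tendsto_coeff_grammarIter_rationalGrammar (W : Option ι) (n : ℕ) :
    Tendsto (fun k => PowerSeries.coeff n (grammarIter (rationalGrammar c α t T) k W))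
      atTop (nhds (PowerSeries.coeff n (rationalSolution c α t T W))) := by
  refine (tendsto_add_atTop_iff_nat 1).1 (tendsto_atTop_of_eventually_const (i₀ := n + 1)
    fun k hk => sub_eq_zero.1 ?_)
  rw [← map_sub]
  exact PowerSeries.X_pow_dvd_iff.1 (X_pow_dvd_grammarIter_succ_sub_rationalSolution k W) n hk

lemma coeff_rationalSolution_some_nonneg (ht : 0 ≤ t) (hT : ∀ i j, 0 ≤ T i j) (i : ι) (n : ℕ) :
    0 ≤ PowerSeries.coeff n (rationalSolution c α t T (some i)) := by
  cases n with
  | zero => simp [rationalSolution]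
  | succ n =>
    rw [rationalSolution, PowerSeries.coeff_succ_X_mul, exitSeries, PowerSeries.coeff_mk]
    exact mulVec_nonneg_of_nonneg (pow_apply_nonneg hT n) ht i

lemma rationalSolution_none_eq_mk {q : ℕ → ℝ} (hq : ∀ n, q (n + 1) = α ⬝ᵥ (T ^ n *ᵥ t)) :
    rationalSolution (q 0) α t T none = PowerSeries.mk q := by
  ext (_ | n)
  · simp [rationalSolution]
  · simp [rationalSolution, exitSeries, PowerSeries.coeff_C_mul, hq, dotProduct]

end RationalGrammar

theorem IsNonnegRational.memFalg {q : ℕ → ℝ} {s : ℝ} (hq : IsNonnegRational q)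
    (hs : HasSum q s) (hspos : 0 < s) : MemFalg (fun n => q n / s) := by
  have hq_nonneg := hq.nonneg
  obtain ⟨hq0, ι, _, _, α, t, T, hα, ht, hT, hqn⟩ := hq
  have hS := rationalSolution_none_eq_mk hqn
  refine ⟨Option ι, inferInstance, none, rationalGrammar (q 0) α t T,
    rationalSolution (q 0) α t T, rationalGrammar_mem_nonnegCoeffs hq0 hα ht hT,
    tendsto_coeff_grammarIter_rationalGrammar, rationalSolution_eq_grammarStep, ?_, s, ?_, hspos,
    fun n => by rw [hS, PowerSeries.coeff_mk]⟩
  · rintro (_ | i) n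
    · rw [hS, PowerSeries.coeff_mk]; exact hq_nonneg n
    · exact coeff_rationalSolution_some_nonneg ht hT i n
  · simpa only [hS, PowerSeries.coeff_mk] using hs

/-- If `X, Y` are independent ℕ-valued random variables with PH distributions
`a, b`, then the conditional distribution of `X` given `X = Y`, namely
`n ↦ a n · b n / s` with `s = ∑ₙ a n · b n > 0`, belongs to `F_alg`. -/
theorem ph_hadamard_conditioned_mem_falg (a b : ℕ → ℝ) (s : ℝ)
    (ha : IsPH a) (hb : IsPH b)
    (hs : HasSum (fun n => a n * b n) s) (hspos : 0 < s) :
    MemFalg (fun n => a n * b n / s) :=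
  (ha.isNonnegRational.mul hb.isNonnegRational).memFalg hs hspos
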